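/- For every a ∈ ℝ² in the interior of the first quadrant (a₁ > 0 and a₂ > 0) and every integer k ≥ 2, one has |E⁴_k(Σ₁, a)| ≤ |E⁴_{k−1}(Σ₁, a)| + |E¹_{k−1}(Σ₁, a)| + 2 and |E²_k(Σ₁, a)| ≤ |E⁴_{k−1}(Σ₁, a)|, where Σ₁ = {A₁, A₂}. -/

import Mathlib

open Matrix Set

noncomputable section

/-- `XSeq S a k` is the set of all vectors `T_{k-1} ⋯ T_0 · a` with each `T_j ∈ S`
(and `XSeq S a 0 = {a}`). -/
def XSeq {n : ℕ} (S : Set (Matrix (Fin n) (Fin n) ℝ)) (a : Fin n → ℝ) : ℕ → Set (Fin n → ℝ)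
  | 0 => {a}
  | k + 1 => ⋃ A ∈ S, A.mulVec '' XSeq S a k

/-- `PHull S a k` is the convex hull of `XSeq S a k`. -/
def PHull {n : ℕ} (S : Set (Matrix (Fin n) (Fin n) ℝ)) (a : Fin n → ℝ) (k : ℕ) :
    Set (Fin n → ℝ) :=
  convexHull ℝ (XSeq S a k)

/-- `EPts S a k` is the set of extreme points of `PHull S a k`. -/
def EPts {n : ℕ} (S : Set (Matrix (Fin n) (Fin n) ℝ)) (a : Fin n → ℝ) (k : ℕ) :
    Set (Fin n → ℝ) :=
  Set.extremePoints ℝ (PHull S a k)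

/-- `NExt S a k` is the number of extreme points of `PHull S a k`. -/
def NExt {n : ℕ} (S : Set (Matrix (Fin n) (Fin n) ℝ)) (a : Fin n → ℝ) (k : ℕ) : ℕ :=
  (EPts S a k).ncard

def M1 : Matrix (Fin 2) (Fin 2) ℝ := !![0, 1; 1, 0]
def M2 : Matrix (Fin 2) (Fin 2) ℝ := !![1, 1; 0, 1]
def M3 : Matrix (Fin 2) (Fin 2) ℝ := !![1, 0; 1, 1]
def M4 : Matrix (Fin 2) (Fin 2) ℝ := !![1, 1; 1, 0]
def M5 : Matrix (Fin 2) (Fin 2) ℝ := !![0, 1; 1, 1]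

/-- Interior of the first quadrant. -/
def intQ1 : Set (Fin 2 → ℝ) := {c | 0 < c 0 ∧ 0 < c 1}
/-- Interior of the second quadrant. -/
def intQ2 : Set (Fin 2 → ℝ) := {c | c 0 < 0 ∧ 0 < c 1}
/-- Interior of the third quadrant. -/
def intQ3 : Set (Fin 2 → ℝ) := {c | c 0 < 0 ∧ c 1 < 0}
/-- Interior of the fourth quadrant. -/
def intQ4 : Set (Fin 2 → ℝ) := {c | 0 < c 0 ∧ c 1 < 0}

/-- `EQuad S a k Q` is the set of extreme points of `PHull S a k` that maximize the linear
functional `x ↦ c ⬝ᵥ x` over `PHull S a k` for some `c ∈ Q`. -/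
def EQuad (S : Set (Matrix (Fin 2) (Fin 2) ℝ)) (a : Fin 2 → ℝ) (k : ℕ)
    (Q : Set (Fin 2 → ℝ)) : Set (Fin 2 → ℝ) :=
  {p ∈ EPts S a k | ∃ c ∈ Q, ∀ x ∈ PHull S a k, c ⬝ᵥ x ≤ c ⬝ᵥ p}

/-! For `c` in the open fourth quadrant and `y` in the open first quadrant (which contains every
`X_k(Σ₁, a)`), `c ⬝ᵥ A₂ A₂ y` exceeds `c ⬝ᵥ A₁ T y` for both `T ∈ Σ₁`; in the open second quadrant
`c ⬝ᵥ A₁ A₂ y` exceeds `c ⬝ᵥ A₂ T y`. So for `k ≥ 2` every point of `E⁴_k` is `A₂ q`, and every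
point of `E²_k` is `A₁ q`, with `q ∈ X_{k-1}`. Since `A₁, A₂` are invertible and map `P_{k-1}` into
`P_k`, such a `q` is an extreme point of `P_{k-1}` maximizing `c ᵥ* A`, which is `(c₁, c₀) ∈ int Q₄`
for `A₁`, and `(c₀, c₀ + c₁)` for `A₂`: this lies in `int Q₄`, in `int Q₁`, or on the positive
first axis. Extreme points maximizing the first coordinate are collinear, so there are at most two
of them. -/

theorem Set.ncard_le_ncard_of_subset_image {α β : Type*} {f : α → β} {s : Set β} {t : Set α}
    (hst : s ⊆ f '' t) (ht : t.Finite) : s.ncard ≤ t.ncard :=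
  (ncard_le_ncard hst (ht.image f)).trans (ncard_image_le ht)

theorem mem_extremePoints_of_map_mem_extremePoints {𝕜 E F : Type*} [Semiring 𝕜] [PartialOrder 𝕜]
    [AddCommMonoid E] [Module 𝕜 E] [AddCommMonoid F] [Module 𝕜 F] {f : E →ₗ[𝕜] F}
    (hf : Function.Injective f) {A : Set E} {B : Set F} (hAB : MapsTo f A B) {x : E}
    (hx : x ∈ A) (hfx : f x ∈ B.extremePoints 𝕜) : x ∈ A.extremePoints 𝕜 := by
  refine ⟨hx, fun y hy z hz hxyz => ?_⟩
  obtain ⟨s, t, hs, ht, hst, rfl⟩ := hxyz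
  have hseg : f (s • y + t • z) ∈ openSegment 𝕜 (f y) (f z) := ⟨s, t, hs, ht, hst, by simp⟩
  exact hf (hfx.2 (hAB hy) (hAB hz) hseg)

theorem Collinear.ncard_le_two_of_subset_extremePoints {𝕜 E : Type*} [Field 𝕜] [LinearOrder 𝕜]
    [IsStrictOrderedRing 𝕜] [AddCommGroup E] [Module 𝕜 E] {A S : Set E}
    (hcol : Collinear 𝕜 S) (hS : S ⊆ A.extremePoints 𝕜) : S.ncard ≤ 2 := by
  by_contra! h
  obtain ⟨x, hx, y, hy, z, hz, hxy, hxz, hyz⟩ :=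
    (two_lt_ncard (finite_of_ncard_pos (by omega))).1 h
  have endpoint : ∀ {u v w}, u ∈ S → v ∈ S → w ∈ S → Wbtw 𝕜 u v w → u = v ∨ w = v :=
    fun hu hv hw hbtw => (mem_extremePoints_iff_forall_segment.1 (hS hv)).2 _
      (extremePoints_subset (hS hu)) _ (extremePoints_subset (hS hw))
      (mem_segment_iff_wbtw.2 hbtw)
  have hxyz : Collinear 𝕜 {x, y, z} :=
    hcol.subset (insert_subset hx (insert_subset hy (singleton_subset_iff.2 hz)))
  rcases hxyz.wbtw_or_wbtw_or_wbtw with hbtw | hbtw | hbtw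
  · exact (endpoint hx hy hz hbtw).elim hxy (hyz ∘ Eq.symm)
  · exact (endpoint hy hz hx hbtw).elim hyz hxz
  · exact (endpoint hz hx hy hbtw).elim (hxz ∘ Eq.symm) (hxy ∘ Eq.symm)

section XSeq

variable {n : ℕ} {S : Set (Matrix (Fin n) (Fin n) ℝ)} {a : Fin n → ℝ}

theorem mem_XSeq_succ {k : ℕ} {x : Fin n → ℝ} :
    x ∈ XSeq S a (k + 1) ↔ ∃ A ∈ S, ∃ y ∈ XSeq S a k, A *ᵥ y = x := by
  simp [XSeq]

theorem mulVec_mem_XSeq_succ {k : ℕ} {A : Matrix (Fin n) (Fin n) ℝ} (hA : A ∈ S)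
    {y : Fin n → ℝ} (hy : y ∈ XSeq S a k) : A *ᵥ y ∈ XSeq S a (k + 1) :=
  mem_XSeq_succ.2 ⟨A, hA, y, hy, rfl⟩

theorem XSeq_finite (hS : S.Finite) : ∀ k, (XSeq S a k).Finite
  | 0 => finite_singleton a
  | k + 1 => hS.biUnion fun _ _ => (XSeq_finite hS k).image _

theorem XSeq_subset {U : Set (Fin n → ℝ)} (hU : ∀ A ∈ S, MapsTo (A *ᵥ ·) U U) (ha : a ∈ U) :
    ∀ k, XSeq S a k ⊆ U
  | 0 => singleton_subset_iff.2 ha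
  | k + 1 => by
      intro x hx
      obtain ⟨A, hA, y, hy, rfl⟩ := mem_XSeq_succ.1 hx
      exact hU A hA (XSeq_subset hU ha k hy)

theorem EPts_subset_XSeq (k : ℕ) : EPts S a k ⊆ XSeq S a k :=
  extremePoints_convexHull_subset

theorem mapsTo_mulVec_PHull {A : Matrix (Fin n) (Fin n) ℝ} (hA : A ∈ S) (k : ℕ) :
    MapsTo (A *ᵥ ·) (PHull S a k) (PHull S a (k + 1)) := by
  intro x hx
  have hx' : A *ᵥ x ∈ convexHull ℝ (A.mulVecLin '' XSeq S a k) := by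
    rw [← LinearMap.image_convexHull]
    exact mem_image_of_mem _ hx
  refine convexHull_mono ?_ hx'
  rintro _ ⟨y, hy, rfl⟩
  exact mulVec_mem_XSeq_succ hA hy

theorem mem_EPts_of_mulVec_mem_EPts {A : Matrix (Fin n) (Fin n) ℝ} (hA : A ∈ S)
    (hinj : Function.Injective A.mulVec) {k : ℕ} {q : Fin n → ℝ} (hq : q ∈ PHull S a k)
    (hAq : A *ᵥ q ∈ EPts S a (k + 1)) : q ∈ EPts S a k :=
  mem_extremePoints_of_map_mem_extremePoints (f := A.mulVecLin) hinj (mapsTo_mulVec_PHull hA k)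
    hq hAq

end XSeq

section EQuad

variable {S : Set (Matrix (Fin 2) (Fin 2) ℝ)} {a : Fin 2 → ℝ}

theorem EQuad_finite (hS : S.Finite) (k : ℕ) (Q : Set (Fin 2 → ℝ)) : (EQuad S a k Q).Finite :=
  (XSeq_finite hS k).subset fun _ hp => EPts_subset_XSeq k hp.1

theorem mem_EQuad_of_mulVec_mem_EPts {A : Matrix (Fin 2) (Fin 2) ℝ} (hA : A ∈ S)
    (hinj : Function.Injective A.mulVec) {k : ℕ} {q : Fin 2 → ℝ} (hq : q ∈ PHull S a k)
    (hAq : A *ᵥ q ∈ EPts S a (k + 1)) {c : Fin 2 → ℝ}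
    (hmax : ∀ x ∈ PHull S a (k + 1), c ⬝ᵥ x ≤ c ⬝ᵥ A *ᵥ q) {Q : Set (Fin 2 → ℝ)}
    (hc : c ᵥ* A ∈ Q) : q ∈ EQuad S a k Q := by
  refine ⟨mem_EPts_of_mulVec_mem_EPts hA hinj hq hAq, c ᵥ* A, hc, fun x hx => ?_⟩
  simpa only [dotProduct_mulVec] using hmax _ (mapsTo_mulVec_PHull hA k hx)

def posAxis0 : Set (Fin 2 → ℝ) := {c | 0 < c 0 ∧ c 1 = 0}

theorem le_of_mem_EQuad_posAxis0 {k : ℕ} {p x : Fin 2 → ℝ} (hp : p ∈ EQuad S a k posAxis0)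
    (hx : x ∈ PHull S a k) : x 0 ≤ p 0 := by
  obtain ⟨-, c, ⟨hc0, hc1⟩, hmax⟩ := hp
  have hcx := hmax x hx
  simp only [dotProduct, Fin.sum_univ_two, hc1, zero_mul, add_zero] at hcx
  exact le_of_mul_le_mul_left hcx hc0

theorem collinear_EQuad_posAxis0 (k : ℕ) : Collinear ℝ (EQuad S a k posAxis0) := by
  rcases (EQuad S a k posAxis0).eq_empty_or_nonempty with h | ⟨p, hp⟩
  · simp [h, collinear_empty]
  refine (collinear_iff_exists_forall_eq_smul_vadd _).2 ⟨p, ![0, 1], fun q hq => ⟨q 1 - p 1, ?_⟩⟩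
  have hqp : q 0 = p 0 := le_antisymm (le_of_mem_EQuad_posAxis0 hp (extremePoints_subset hq.1))
    (le_of_mem_EQuad_posAxis0 hq (extremePoints_subset hp.1))
  ext i
  fin_cases i <;> simp [hqp]

theorem ncard_EQuad_posAxis0_le (k : ℕ) : (EQuad S a k posAxis0).ncard ≤ 2 :=
  (collinear_EQuad_posAxis0 k).ncard_le_two_of_subset_extremePoints fun _ hp => hp.1

end EQuad

section Sigma1

theorem M1_mulVec (x : Fin 2 → ℝ) : M1 *ᵥ x = ![x 1, x 0] := by
  ext i; fin_cases i <;> simp [M1, mulVec, dotProduct]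

theorem M2_mulVec (x : Fin 2 → ℝ) : M2 *ᵥ x = ![x 0 + x 1, x 1] := by
  ext i; fin_cases i <;> simp [M2, mulVec, dotProduct]

theorem vecMul_M1 (c : Fin 2 → ℝ) : c ᵥ* M1 = ![c 1, c 0] := by
  ext i; fin_cases i <;> simp [M1, vecMul, dotProduct]

theorem vecMul_M2 (c : Fin 2 → ℝ) : c ᵥ* M2 = ![c 0, c 0 + c 1] := by
  ext i; fin_cases i <;> simp [M2, vecMul, dotProduct]

theorem M1_mulVec_injective : Function.Injective M1.mulVec :=
  mulVec_injective_iff_isUnit.2 <| (isUnit_iff_isUnit_det _).2 <| by simp [M1, det_fin_two_of]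

theorem M2_mulVec_injective : Function.Injective M2.mulVec :=
  mulVec_injective_iff_isUnit.2 <| (isUnit_iff_isUnit_det _).2 <| by simp [M2, det_fin_two_of]

theorem XSeq_subset_intQ1 {a : Fin 2 → ℝ} (ha : a ∈ intQ1) (k : ℕ) :
    XSeq {M1, M2} a k ⊆ intQ1 := by
  refine XSeq_subset ?_ ha k
  rintro A (rfl | rfl) x ⟨hx0, hx1⟩
  · simp only [M1_mulVec]
    exact ⟨hx1, hx0⟩
  · simp only [M2_mulVec]
    exact ⟨add_pos hx0 hx1, hx1⟩

theorem dotProduct_M1_mulVec_lt_of_mem_intQ4 {c : Fin 2 → ℝ} (hc : c ∈ intQ4)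
    {A : Matrix (Fin 2) (Fin 2) ℝ} (hA : A ∈ ({M1, M2} : Set _)) {y : Fin 2 → ℝ}
    (hy : y ∈ intQ1) : c ⬝ᵥ M1 *ᵥ A *ᵥ y < c ⬝ᵥ M2 *ᵥ M2 *ᵥ y := by
  obtain ⟨hc0, hc1⟩ := hc
  obtain ⟨hy0, hy1⟩ := hy
  rcases hA with rfl | rfl <;>
    simp only [M1_mulVec, M2_mulVec, dotProduct, Fin.sum_univ_two, cons_val_zero, cons_val_one,
      cons_val_fin_one] <;> nlinarith

theorem dotProduct_M2_mulVec_lt_of_mem_intQ2 {c : Fin 2 → ℝ} (hc : c ∈ intQ2)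
    {A : Matrix (Fin 2) (Fin 2) ℝ} (hA : A ∈ ({M1, M2} : Set _)) {y : Fin 2 → ℝ}
    (hy : y ∈ intQ1) : c ⬝ᵥ M2 *ᵥ A *ᵥ y < c ⬝ᵥ M1 *ᵥ M2 *ᵥ y := by
  obtain ⟨hc0, hc1⟩ := hc
  obtain ⟨hy0, hy1⟩ := hy
  rcases hA with rfl | rfl <;>
    simp only [M1_mulVec, M2_mulVec, dotProduct, Fin.sum_univ_two, cons_val_zero, cons_val_one,
      cons_val_fin_one] <;> nlinarith

theorem EQuad_intQ2_subset {a : Fin 2 → ℝ} (ha : a ∈ intQ1) (k : ℕ) :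
    EQuad {M1, M2} a (k + 2) intQ2 ⊆ M1.mulVec '' EQuad {M1, M2} a (k + 1) intQ4 := by
  rintro p ⟨hpE, c, hc, hmax⟩
  obtain ⟨A, hA | hA, x, hx, rfl⟩ := mem_XSeq_succ.1 (EPts_subset_XSeq _ hpE)
  · subst hA
    refine ⟨x, mem_EQuad_of_mulVec_mem_EPts (by simp) M1_mulVec_injective
      (subset_convexHull ℝ _ hx) hpE hmax ?_, rfl⟩
    simpa [vecMul_M1, intQ4] using hc.symm
  · rw [mem_singleton_iff] at hA
    subst hA
    obtain ⟨A, hA, y, hy, rfl⟩ := mem_XSeq_succ.1 hx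
    have hle := hmax _ <| subset_convexHull ℝ _ <|
      mulVec_mem_XSeq_succ (A := M1) (by simp) (mulVec_mem_XSeq_succ (A := M2) (by simp) hy)
    exact absurd hle (dotProduct_M2_mulVec_lt_of_mem_intQ2 hc hA
      (XSeq_subset_intQ1 ha k hy)).not_ge

theorem EQuad_intQ4_subset {a : Fin 2 → ℝ} (ha : a ∈ intQ1) (k : ℕ) :
    EQuad {M1, M2} a (k + 2) intQ4 ⊆ M2.mulVec ''
      (EQuad {M1, M2} a (k + 1) intQ4 ∪ EQuad {M1, M2} a (k + 1) intQ1 ∪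
        EQuad {M1, M2} a (k + 1) posAxis0) := by
  rintro p ⟨hpE, c, hc, hmax⟩
  obtain ⟨A, hA | hA, x, hx, rfl⟩ := mem_XSeq_succ.1 (EPts_subset_XSeq _ hpE)
  · subst hA
    obtain ⟨A, hA, y, hy, rfl⟩ := mem_XSeq_succ.1 hx
    have hle := hmax _ <| subset_convexHull ℝ _ <|
      mulVec_mem_XSeq_succ (A := M2) (by simp) (mulVec_mem_XSeq_succ (A := M2) (by simp) hy)
    exact absurd hle (dotProduct_M1_mulVec_lt_of_mem_intQ4 hc hA
      (XSeq_subset_intQ1 ha k hy)).not_ge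
  · rw [mem_singleton_iff] at hA
    subst hA
    have hpull : ∀ {Q}, ![c 0, c 0 + c 1] ∈ Q → x ∈ EQuad {M1, M2} a (k + 1) Q := fun hQ =>
      mem_EQuad_of_mulVec_mem_EPts (by simp) M2_mulVec_injective (subset_convexHull ℝ _ hx) hpE
        hmax (by rwa [vecMul_M2])
    obtain ⟨hc0, hc1⟩ := hc
    refine ⟨x, ?_, rfl⟩
    rcases lt_trichotomy (c 0 + c 1) 0 with h | h | h
    · exact .inl (.inl (hpull ⟨hc0, h⟩))
    · exact .inr (hpull ⟨hc0, h⟩)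
    · exact .inl (.inr (hpull ⟨hc0, h⟩))

end Sigma1

/-- For `a` in the interior of the first quadrant and `k ≥ 2`,
`|E⁴_k(Σ₁, a)| ≤ |E⁴_{k-1}(Σ₁, a)| + |E¹_{k-1}(Σ₁, a)| + 2` and
`|E²_k(Σ₁, a)| ≤ |E⁴_{k-1}(Σ₁, a)|`. -/
theorem stmt12 (a : Fin 2 → ℝ) (ha : 0 < a 0 ∧ 0 < a 1) (k : ℕ) (hk : 2 ≤ k) :
    (EQuad {M1, M2} a k intQ4).ncard ≤
      (EQuad {M1, M2} a (k - 1) intQ4).ncard + (EQuad {M1, M2} a (k - 1) intQ1).ncard + 2 ∧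
    (EQuad {M1, M2} a k intQ2).ncard ≤ (EQuad {M1, M2} a (k - 1) intQ4).ncard := by
  obtain ⟨k, rfl⟩ : ∃ j, k = j + 2 := ⟨k - 2, by omega⟩
  have hfin := EQuad_finite (S := {M1, M2}) (toFinite _) (a := a) (k + 1)
  refine ⟨?_, ncard_le_ncard_of_subset_image (EQuad_intQ2_subset ha k) (hfin _)⟩
  calc (EQuad {M1, M2} a (k + 2) intQ4).ncard
      ≤ (EQuad {M1, M2} a (k + 1) intQ4 ∪ EQuad {M1, M2} a (k + 1) intQ1 ∪
          EQuad {M1, M2} a (k + 1) posAxis0).ncard :=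
        ncard_le_ncard_of_subset_image (EQuad_intQ4_subset ha k)
          (((hfin _).union (hfin _)).union (hfin _))
    _ ≤ (EQuad {M1, M2} a (k + 1) intQ4).ncard + (EQuad {M1, M2} a (k + 1) intQ1).ncard +
          (EQuad {M1, M2} a (k + 1) posAxis0).ncard :=
        (ncard_union_le _ _).trans (Nat.add_le_add_right (ncard_union_le _ _) _)
    _ ≤ _ := Nat.add_le_add_left (ncard_EQuad_posAxis0_le _) _

end
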